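/- Let V be a unitary module for a Lie superalgebra of operators with Hermitian form H satisfying H(m, J_n m') = -H(J^ω_{-n} m, m') for currents, H(m, G_n m') = H(G^ω_{-n} m, m') for supercurrents, and H(m, L_n m') = H(L_{-n} m, m'). Define shifted operators J^R_n = e^{-(π/4)iγ_a}J_{n+γ_a/2} + ½δ_{n,0}β(h,a), G^R_n = e^{-(π/4)iγ_v}G_{n+γ_v/2}, L^R_n = L_n + ½J^{h}_n + δ_{n,0}(1/8)β(h,h), where β(h,a) ∈ ℝ whenever γ_a = 0 and β(h,h) ∈ ℝ, and γ_{ω(a)} = -γ_a, ω-antilinearity gives \overline{β(h,a)} = -β(h,ω(a)). Then the same unitarity relations hold for the shifted operators: H(m, (J^{a})^R_n m') = -H((J^{ω(a)})^R_{-n} m, m'), H(m, (G^{v})^R_n m') = H((G^{ω(v)})^R_{-n} m, m'), H(m, L^R_n m') = H(L^R_{-n} m, m'). -/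
import Mathlib


open Complex

/-- Spectral flow preserves unitarity (Lemma on the invariance of the Hermitian
adjointness relations): if the Hermitian form `H` satisfies the unitarity relations for
the modes `J^a_x`, `G^v_x`, `L_x` (`x ∈ ℝ`), then the spectral-flow–shifted modes
`(J^a)^R_n = e^{-(π/4)iγ_a} J^a_{n+γ_a/2} + ½δ_{n,0}β(h,a)`,
`(G^v)^R_n = e^{-(π/4)iγ_v} G^v_{n+γ_v/2}`,
`L^R_n = L_n + ½ J^h_n + δ_{n,0}(1/8)β(h,h)` satisfy the same relations. -/
theorem stmt18 (A B M : Type*) [AddCommGroup M] [Module ℂ M]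
    (H : M →ₛₗ[starRingEnd ℂ] M →ₗ[ℂ] ℂ)
    (ωA : A → A) (ωB : B → B) (γA : A → ℝ) (γB : B → ℝ)
    (J : A → ℝ → (M →ₗ[ℂ] M)) (G : B → ℝ → (M →ₗ[ℂ] M)) (L : ℝ → (M →ₗ[ℂ] M))
    (h : A) (β : A → ℂ)
    -- ω is an involution and γ_{ω(a)} = -γ_a
    (hωA2 : ∀ a, ωA (ωA a) = a) (hωB2 : ∀ v, ωB (ωB v) = v)
    (hγA : ∀ a, γA (ωA a) = -γA a) (hγB : ∀ v, γB (ωB v) = -γB v)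
    -- reality conditions on β and ω-antilinearity
    (hβreal : ∀ a, γA a = 0 → (starRingEnd ℂ) (β a) = β a)
    (hβh : (starRingEnd ℂ) (β h) = β h)
    (hβω : ∀ a, (starRingEnd ℂ) (β a) = -β (ωA a))
    (hβzero : ∀ a, γA a ≠ 0 → β a = 0)
    -- ω(h) = -h at the level of currents
    (hωh : ∀ x : ℝ, J (ωA h) x = -J h x)
    -- unitarity relations for the original modes
    (hJ : ∀ (a : A) (x : ℝ) (m m' : M), H m (J a x m') = -H (J (ωA a) (-x) m) m')
    (hG : ∀ (v : B) (x : ℝ) (m m' : M), H m (G v x m') = H (G (ωB v) (-x) m) m')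
    (hL : ∀ (x : ℝ) (m m' : M), H m (L x m') = H (L (-x) m) m') :
    -- the same unitarity relations hold for the shifted modes
    (∀ (a : A) (n : ℤ) (m m' : M),
      H m ((Complex.exp (-(Real.pi / 4) * Complex.I * γA a) • J a ((n : ℝ) + γA a / 2)
          + (if n = 0 then (1 / 2 : ℂ) * β a else 0) • (LinearMap.id : M →ₗ[ℂ] M)) m')
        = -H ((Complex.exp (-(Real.pi / 4) * Complex.I * γA (ωA a)) •
              J (ωA a) ((-n : ℝ) + γA (ωA a) / 2)
            + (if (-n : ℤ) = 0 then (1 / 2 : ℂ) * β (ωA a) else 0) •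
              (LinearMap.id : M →ₗ[ℂ] M)) m) m')
    ∧ (∀ (v : B) (n : ℤ) (m m' : M),
      H m ((Complex.exp (-(Real.pi / 4) * Complex.I * γB v) • G v ((n : ℝ) + γB v / 2)) m')
        = H ((Complex.exp (-(Real.pi / 4) * Complex.I * γB (ωB v)) •
              G (ωB v) ((-n : ℝ) + γB (ωB v) / 2)) m) m')
    ∧ (∀ (n : ℤ) (m m' : M),
      H m ((L (n : ℝ) + (1 / 2 : ℂ) • J h (n : ℝ)
          + (if n = 0 then (1 / 8 : ℂ) * β h else 0) • (LinearMap.id : M →ₗ[ℂ] M)) m')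
        = H ((L ((-n : ℤ) : ℝ) + (1 / 2 : ℂ) • J h ((-n : ℤ) : ℝ)
          + (if (-n : ℤ) = 0 then (1 / 8 : ℂ) * β h else 0) •
            (LinearMap.id : M →ₗ[ℂ] M)) m) m') := by
  have hconj : ∀ r : ℝ, (starRingEnd ℂ) (Complex.exp (-(Real.pi / 4) * Complex.I * r))
      = Complex.exp (-(Real.pi / 4) * Complex.I * ((-r : ℝ) : ℂ)) := by
    intro r
    rw [← Complex.exp_conj]
    congr 1
    simp only [map_mul, map_neg, Complex.conj_I, Complex.conj_ofReal, map_div₀,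
      Complex.ofReal_neg, map_ofNat]
    ring
  refine ⟨?_, ?_, ?_⟩
  · intro a n m m'
    have key : H m (J a ((n:ℝ) + γA a / 2) m')
        = -H (J (ωA a) ((-n:ℝ) + γA (ωA a) / 2) m) m' := by
      rw [hJ a ((n:ℝ) + γA a / 2) m m']
      congr 3
      rw [hγA]; push_cast; ring
    have hδ : (starRingEnd ℂ) (if (-n : ℤ) = 0 then (1 / 2 : ℂ) * β (ωA a) else 0)
        = -(if n = 0 then (1 / 2 : ℂ) * β a else 0) := by
      by_cases hn : n = 0 <;> simp [hn, neg_eq_zero, map_mul, map_ofNat, map_div₀]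
      rw [show (starRingEnd ℂ) (β (ωA a)) = -β a by rw [hβω, hωA2]]
      ring
    simp only [LinearMap.add_apply, LinearMap.smul_apply, LinearMap.id_apply, map_add,
      map_smul, map_smulₛₗ, smul_eq_mul, LinearMap.neg_apply]
    rw [key, hconj, hγA, hδ, neg_neg]
    push_cast
    ring
  · intro v n m m'
    have key : H m (G v ((n:ℝ) + γB v / 2) m')
        = H (G (ωB v) ((-n:ℝ) + γB (ωB v) / 2) m) m' := by
      rw [hG v ((n:ℝ) + γB v / 2) m m']
      congr 3
      rw [hγB]; push_cast; ring
    simp only [LinearMap.smul_apply, map_smul, map_smulₛₗ, smul_eq_mul]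
    rw [key, hconj, hγB, neg_neg]
  · intro n m m'
    have key : H m (J h ((n:ℝ)) m') = H (J h ((-n : ℤ) : ℝ) m) m' := by
      rw [hJ h ((n:ℝ)) m m']
      rw [show ((-(n:ℝ))) = (((-n : ℤ) : ℝ)) by push_cast; ring] at *
      rw [hωh]
      simp
    have hδ : (starRingEnd ℂ) (if (-n : ℤ) = 0 then (1 / 8 : ℂ) * β h else 0)
        = (if n = 0 then (1 / 8 : ℂ) * β h else 0) := by
      by_cases hn : n = 0 <;> simp [hn, neg_eq_zero, map_mul, hβh, map_ofNat, map_div₀]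
    simp only [LinearMap.add_apply, LinearMap.smul_apply, LinearMap.id_apply, map_add,
      map_smul, map_smulₛₗ, smul_eq_mul]
    rw [key, hδ, hL (n:ℝ) m m',
      show (-(n:ℝ)) = (((-n : ℤ) : ℝ)) by push_cast; ring]
    simp [map_div₀, map_ofNat]
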